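/- arXiv:2407.17528 — 6 statements merged into one kernel-verified Lean document; each statement's English description precedes it below -/
import Mathlib

section
/- Let m, λ, a be real constants. Define f(u,v) = cos²(a u), g(u,v) = 0, and r(u,v) = 2m − 4λ²uv + (1/32)(1 − cos(4au)) − (1/4)a²u². Then r and f satisfy the CGHS field equations: ∂_u∂_v r = −4λ², ∂_u∂_u r = −(∂_u f)², and ∂_v∂_v r = −(∂_v f)² (= 0) at every point (u,v) ∈ ℝ². -/
/-!
The function `r` has the form `R(u) − 4λ²uv`, so `∂_u∂_v r = −4λ²` and `∂_v∂_v r = 0`, while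
`f` does not depend on `v`. In `u`, the `u²` and `cos 4au` terms of `R` are tuned so that
`R'' = (a²/2)(cos 4au − 1) = −a² sin² 2au`, which is `−(∂_u cos² au)²` since
`∂_u cos² au = −a sin 2au`.
-/

open Real

noncomputable def cghsR (m lam a u v : ℝ) : ℝ :=
  2 * m - 4 * lam ^ 2 * u * v + (1 / 32) * (1 - cos (4 * a * u)) - (1 / 4) * a ^ 2 * u ^ 2

section

variable (m lam a : ℝ)

theorem hasDerivAt_cghsR_snd (u v : ℝ) :
    HasDerivAt (cghsR m lam a u) (-(4 * lam ^ 2 * u)) v := by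
  have h := ((((hasDerivAt_id v).const_mul (4 * lam ^ 2 * u)).const_sub (2 * m)).add_const
    ((1 / 32) * (1 - cos (4 * a * u)))).sub_const ((1 / 4) * a ^ 2 * u ^ 2)
  exact h.congr_deriv (by ring)

theorem hasDerivAt_cghsR_fst (u v : ℝ) :
    HasDerivAt (fun x => cghsR m lam a x v)
      (-(4 * lam ^ 2 * v) + a / 8 * sin (4 * a * u) - a ^ 2 / 2 * u) u := by
  have hlin := ((hasDerivAt_id u).const_mul (4 * lam ^ 2)).mul_const v
  have hcos := (((hasDerivAt_id u).const_mul (4 * a)).cos.const_sub 1).const_mul (1 / 32 : ℝ)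
  have hsq := (hasDerivAt_pow 2 u).const_mul ((1 / 4) * a ^ 2)
  exact (((hlin.const_sub (2 * m)).add hcos).sub hsq).congr_deriv (by simp only [id]; ring)

theorem hasDerivAt_deriv_cghsR_fst (u v : ℝ) :
    HasDerivAt (fun x => deriv (fun x' => cghsR m lam a x' v) x)
      (-(a ^ 2 * sin (2 * a * u) ^ 2)) u := by
  have hfst : (fun x => deriv (fun x' => cghsR m lam a x' v) x)
      = fun x => -(4 * lam ^ 2 * v) + a / 8 * sin (4 * a * x) - a ^ 2 / 2 * x :=
    funext fun x => (hasDerivAt_cghsR_fst m lam a x v).deriv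
  rw [hfst]
  have h := ((((hasDerivAt_id u).const_mul (4 * a)).sin.const_mul (a / 8)).const_add
    (-(4 * lam ^ 2 * v))).sub ((hasDerivAt_id u).const_mul (a ^ 2 / 2))
  refine h.congr_deriv ?_
  rw [sin_sq_eq_half_sub, show 2 * (2 * a * u) = 4 * a * u by ring]
  simp only [id]; ring

end

theorem hasDerivAt_cos_mul_sq (a u : ℝ) :
    HasDerivAt (fun x => cos (a * x) ^ 2) (-(a * sin (2 * a * u))) u := by
  refine (((hasDerivAt_id u).const_mul a).cos.pow 2).congr_deriv ?_
  rw [show 2 * a * u = 2 * (a * u) by ring, sin_two_mul]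
  simp only [id]; ring

theorem stmt_0_general (m lam a : ℝ)
    (f : ℝ → ℝ → ℝ) (hf : f = fun u _ => Real.cos (a * u) ^ 2)
    (r : ℝ → ℝ → ℝ)
    (hr : r = fun u v =>
      2 * m - 4 * lam ^ 2 * u * v + (1 / 32) * (1 - Real.cos (4 * a * u))
        - (1 / 4) * a ^ 2 * u ^ 2) :
    ∀ u v : ℝ,
      deriv (fun x => deriv (fun y => r x y) v) u = -4 * lam ^ 2 ∧
      deriv (fun x => deriv (fun x' => r x' v) x) u
        = -(deriv (fun x => f x v) u) ^ 2 ∧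
      deriv (fun y => deriv (fun y' => r u y') y) v
        = -(deriv (fun y => f u y) v) ^ 2 := by
  obtain rfl : r = cghsR m lam a := hr
  subst hf
  intro u v
  dsimp only
  have hsnd : ∀ x, deriv (cghsR m lam a x) = fun _ => -(4 * lam ^ 2 * x) :=
    fun x => funext fun y => (hasDerivAt_cghsR_snd m lam a x y).deriv
  refine ⟨?_, ?_, ?_⟩
  · simp [hsnd]
  · rw [(hasDerivAt_deriv_cghsR_fst m lam a u v).deriv, (hasDerivAt_cos_mul_sq a u).deriv,
      neg_sq, mul_pow]
  · simp [hsnd]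

/-- For the CGHS model with a single bounded real field
`f(u,v) = cos²(a u)`, ghost field `g = 0`, and
`r(u,v) = 2m − 4λ²uv + (1/32)(1 − cos(4au)) − (1/4)a²u²`, the CGHS field
equations `∂_u∂_v r = −4λ²`, `∂_u∂_u r = −(∂_u f)²`, `∂_v∂_v r = −(∂_v f)²`
hold at every point of `ℝ²`. -/
theorem stmt_0 (m lam a : ℝ)
    (f : ℝ → ℝ → ℝ) (hf : f = fun u _ => Real.cos (a * u) ^ 2)
    (g : ℝ → ℝ → ℝ) (hg : g = fun _ _ => (0 : ℝ))
    (r : ℝ → ℝ → ℝ)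
    (hr : r = fun u v =>
      2 * m - 4 * lam ^ 2 * u * v + (1 / 32) * (1 - Real.cos (4 * a * u))
        - (1 / 4) * a ^ 2 * u ^ 2) :
    ∀ u v : ℝ,
      deriv (fun x => deriv (fun y => r x y) v) u = -4 * lam ^ 2 ∧
      deriv (fun x => deriv (fun x' => r x' v) x) u
        = -(deriv (fun x => f x v) u) ^ 2 ∧
      deriv (fun y => deriv (fun y' => r u y') y) v
        = -(deriv (fun y => f u y) v) ^ 2 :=
  stmt_0_general m lam a f hf r hr
end

section
/- Let m > 0, λ, a, b be real constants and set r(u,v) = 2m − 4λ²uv − (1/3)(a⁴u⁴ + b⁴v⁴). On the open set where r(u,v) > 0, define φ(u,v) by e^{−2φ(u,v)} = r(u,v)/2. Then the scalar curvature 4e^{−2φ}∂_u∂_vφ equals (4/r)[λ²(2m + a⁴u⁴ + b⁴v⁴) + (4/9)a⁴b⁴u³v³] on that set. -/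
/-- With `r(u,v) = 2m − 4λ²uv − (1/3)(a⁴u⁴ + b⁴v⁴)` and the
dilaton `φ` defined on the open set `{r > 0}` by `e^{−2φ} = r/2`, the scalar
curvature `4 e^{−2φ} ∂_u∂_v φ` equals
`(4/r)[λ²(2m + a⁴u⁴ + b⁴v⁴) + (4/9)a⁴b⁴u³v³]` on that set. -/
theorem stmt_3 (m lam a b : ℝ) (hm : 0 < m)
    (r : ℝ → ℝ → ℝ)
    (hr : r = fun u v =>
      2 * m - 4 * lam ^ 2 * u * v - (1 / 3) * (a ^ 4 * u ^ 4 + b ^ 4 * v ^ 4))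
    (φ : ℝ → ℝ → ℝ)
    (hφ : ∀ u v : ℝ, 0 < r u v → Real.exp (-(2 * φ u v)) = r u v / 2) :
    ∀ u v : ℝ, 0 < r u v →
      4 * Real.exp (-(2 * φ u v)) * deriv (fun x => deriv (fun y => φ x y) v) u
        = (4 / r u v) *
            (lam ^ 2 * (2 * m + a ^ 4 * u ^ 4 + b ^ 4 * v ^ 4)
              + (4 / 9) * a ^ 4 * b ^ 4 * u ^ 3 * v ^ 3) := by
  subst hr
  intro u v huv
  simp only at huv hφ ⊢
  set R : ℝ → ℝ → ℝ := fun x y =>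
    2 * m - 4 * lam ^ 2 * x * y - (1 / 3) * (a ^ 4 * x ^ 4 + b ^ 4 * y ^ 4) with hR
  -- openness of {R > 0}
  have hc : Continuous (fun p : ℝ × ℝ => R p.1 p.2) := by
    simp only [hR]; fun_prop
  have hopen : IsOpen {p : ℝ × ℝ | 0 < R p.1 p.2} :=
    isOpen_lt continuous_const hc
  obtain ⟨ε, hε, hball⟩ := Metric.isOpen_iff.mp hopen (u, v) huv
  have hpos : ∀ x y : ℝ, dist x u < ε → dist y v < ε → 0 < R x y := by
    intro x y hx hy
    have hmem : ((x, y) : ℝ × ℝ) ∈ Metric.ball (u, v) ε := by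
      rw [Metric.mem_ball, Prod.dist_eq]
      exact max_lt hx hy
    exact hball hmem
  -- φ formula on {R > 0}
  have hφ' : ∀ x y : ℝ, 0 < R x y → φ x y = -(Real.log (R x y / 2)) / 2 := by
    intro x y h
    have h1 : Real.log (Real.exp (-(2 * φ x y))) = Real.log (R x y / 2) := by
      rw [hφ x y h]
    rw [Real.log_exp] at h1
    linarith
  -- inner derivative: for x near u
  have hinner : ∀ x : ℝ, dist x u < ε →
      deriv (fun y => φ x y) v =
        -(((0 - 4 * lam ^ 2 * x - (1 / 3) * (b ^ 4 * (4 * v ^ 3))) / 2)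
          / (R x v / 2)) / 2 := by
    intro x hx
    have hEq : (fun y => φ x y) =ᶠ[nhds v]
        (fun y => -(Real.log (R x y / 2)) / 2) := by
      filter_upwards [Metric.ball_mem_nhds v hε] with y hy
      exact hφ' x y (hpos x y hx (Metric.mem_ball.mp hy))
    have hA : HasDerivAt (fun y : ℝ => 4 * lam ^ 2 * x * y) (4 * lam ^ 2 * x) v := by
      simpa using (hasDerivAt_id v).const_mul (4 * lam ^ 2 * x)
    have hpow : HasDerivAt (fun y : ℝ => y ^ 4) (4 * v ^ 3) v := by
      simpa using hasDerivAt_pow 4 v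
    have hB : HasDerivAt (fun y : ℝ => (1 / 3) * (a ^ 4 * x ^ 4 + b ^ 4 * y ^ 4))
        ((1 / 3) * (b ^ 4 * (4 * v ^ 3))) v := by
      exact (((hpow.const_mul (b ^ 4)).const_add (a ^ 4 * x ^ 4)).const_mul (1 / 3))
    have hRd : HasDerivAt (fun y => R x y)
        (0 - 4 * lam ^ 2 * x - (1 / 3) * (b ^ 4 * (4 * v ^ 3))) v :=
      ((hasDerivAt_const v (2 * m)).sub hA).sub hB
    have hRne : R x v / 2 ≠ 0 := by
      have := hpos x v hx (by simpa using hε)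
      positivity
    have hF : HasDerivAt (fun y => -(Real.log (R x y / 2)) / 2)
        (-(((0 - 4 * lam ^ 2 * x - (1 / 3) * (b ^ 4 * (4 * v ^ 3))) / 2)
          / (R x v / 2)) / 2) v :=
      (((hRd.div_const 2).log hRne).neg).div_const 2
    rw [hEq.deriv_eq, hF.deriv]
  -- outer derivative
  have houter : (fun x => deriv (fun y => φ x y) v) =ᶠ[nhds u]
      (fun x => -(((0 - 4 * lam ^ 2 * x - (1 / 3) * (b ^ 4 * (4 * v ^ 3))) / 2)
          / (R x v / 2)) / 2) := by
    filter_upwards [Metric.ball_mem_nhds u hε] with x hx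
    exact hinner x (Metric.mem_ball.mp hx)
  have hP : HasDerivAt (fun x : ℝ =>
      (0 - 4 * lam ^ 2 * x - (1 / 3) * (b ^ 4 * (4 * v ^ 3))) / 2)
      ((0 - 4 * lam ^ 2 - 0) / 2) u := by
    have h1 : HasDerivAt (fun x : ℝ => 4 * lam ^ 2 * x) (4 * lam ^ 2) u := by
      simpa using (hasDerivAt_id u).const_mul (4 * lam ^ 2)
    exact (((hasDerivAt_const u (0:ℝ)).sub h1).sub
      (hasDerivAt_const u ((1 / 3) * (b ^ 4 * (4 * v ^ 3))))).div_const 2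
  have hpowu : HasDerivAt (fun x : ℝ => x ^ 4) (4 * u ^ 3) u := by
    simpa using hasDerivAt_pow 4 u
  have hQ : HasDerivAt (fun x : ℝ => R x v / 2)
      ((0 - 4 * lam ^ 2 * v - (1 / 3) * (a ^ 4 * (4 * u ^ 3) + 0)) / 2) u := by
    have hA : HasDerivAt (fun x : ℝ => 4 * lam ^ 2 * x * v) (4 * lam ^ 2 * v) u := by
      have : HasDerivAt (fun x : ℝ => (4 * lam ^ 2 * v) * x) (4 * lam ^ 2 * v) u := by
        simpa using (hasDerivAt_id u).const_mul (4 * lam ^ 2 * v)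
      convert this using 2 with x
      ring
    have hB : HasDerivAt (fun x : ℝ => (1 / 3) * (a ^ 4 * x ^ 4 + b ^ 4 * v ^ 4))
        ((1 / 3) * (a ^ 4 * (4 * u ^ 3) + 0)) u :=
      (((hpowu.const_mul (a ^ 4)).add (hasDerivAt_const u (b ^ 4 * v ^ 4))).const_mul (1 / 3))
    exact (((hasDerivAt_const u (2 * m)).sub hA).sub hB).div_const 2
  have hQne : R u v / 2 ≠ 0 := by positivity
  have hD : HasDerivAt
      (fun x => -(((0 - 4 * lam ^ 2 * x - (1 / 3) * (b ^ 4 * (4 * v ^ 3))) / 2)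
          / (R x v / 2)) / 2)
      (-((((0 - 4 * lam ^ 2 - 0) / 2) * (R u v / 2)
          - ((0 - 4 * lam ^ 2 * u - (1 / 3) * (b ^ 4 * (4 * v ^ 3))) / 2)
            * ((0 - 4 * lam ^ 2 * v - (1 / 3) * (a ^ 4 * (4 * u ^ 3) + 0)) / 2))
        / (R u v / 2) ^ 2) / 2) u :=
    ((hP.div hQ hQne).neg).div_const 2
  rw [houter.deriv_eq, hD.deriv, hφ u v huv]
  have hRne : R u v ≠ 0 := ne_of_gt huv
  have hexp : (2 * m - 4 * lam ^ 2 * u * v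
      - (1 / 3) * (a ^ 4 * u ^ 4 + b ^ 4 * v ^ 4)) = R u v := rfl
  rw [hexp]
  field_simp
  ring
end

section
/- Let m, λ, a, b be real constants. Define the ghost field g(u,v) = −1 + cosh²(au) + cosh²(bv), f(u,v) = 0, and r(u,v) = 2m − 4λ²uv − 1/16 + (1/32)(cosh(4au) + cosh(4bv)) − (1/4)(a²u² + b²v²). Then ∂_u∂_v r = −4λ², ∂_u∂_u r = (∂_u g)², and ∂_v∂_v r = (∂_v g)² at every point (u,v) ∈ ℝ². -/
/-!
The function `r` separates as `2m - 1/16 - 4λ²uv + P a u + P b v` with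
`P c x = cosh (4cx) / 32 - c²x² / 4`. The bilinear term alone gives `∂_u∂_v r = -4λ²`, and the
other two equations reduce to the one-variable identity `P c'' x = (c sinh (2cx))²`, the square
of `d/dx cosh² (cx)`; this is the half-angle formula `2 sinh² y = cosh 2y - 1`.
-/

open Real

section Separable
variable {p q : ℝ → ℝ} (C k : ℝ)

theorem hasDerivAt_separable_right (hq : Differentiable ℝ q) (x v : ℝ) :
    HasDerivAt (fun y => C + k * x * y + p x + q y) (k * x + deriv q v) v := by
  have h := ((((hasDerivAt_id' v).const_mul (k * x)).const_add C).add_const (p x)).add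
    (hq v).hasDerivAt
  exact h.congr_deriv (by ring)

theorem hasDerivAt_separable_left (hp : Differentiable ℝ p) (u y : ℝ) :
    HasDerivAt (fun x => C + k * x * y + p x + q y) (k * y + deriv p u) u := by
  have h := ((((hasDerivAt_id' u).const_mul k).mul_const y).const_add C).add (hp u).hasDerivAt
    |>.add_const (q y)
  exact h.congr_deriv (by ring)

theorem deriv_deriv_mixed_of_separable (hq : Differentiable ℝ q) (u v : ℝ) :
    deriv (fun x => deriv (fun y => C + k * x * y + p x + q y) v) u = k := by
  simp_rw [(hasDerivAt_separable_right C k hq _ v).deriv]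
  exact (((hasDerivAt_id' u).const_mul k).add_const (deriv q v)).deriv.trans (mul_one k)

theorem deriv_deriv_left_of_separable (hp : Differentiable ℝ p) (u y : ℝ) :
    deriv (fun x => deriv (fun x' => C + k * x' * y + p x' + q y) x) u = deriv (deriv p) u := by
  simp_rw [(hasDerivAt_separable_left C k hp _ y).deriv, deriv_const_add]

theorem deriv_deriv_right_of_separable (hq : Differentiable ℝ q) (x v : ℝ) :
    deriv (fun y => deriv (fun y' => C + k * x * y' + p x + q y') y) v = deriv (deriv q) v := by
  simp_rw [(hasDerivAt_separable_right C k hq x _).deriv, deriv_const_add]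

end Separable

theorem hasDerivAt_cosh_mul_sq (c x : ℝ) :
    HasDerivAt (fun y => cosh (c * y) ^ 2) (c * sinh (2 * (c * x))) x := by
  have h := (((hasDerivAt_id' x).const_mul c).cosh).pow 2
  exact h.congr_deriv (by rw [sinh_two_mul]; push_cast; ring)

noncomputable def ghostProfile (c x : ℝ) : ℝ := cosh (4 * c * x) / 32 - c ^ 2 * x ^ 2 / 4

theorem hasDerivAt_ghostProfile (c x : ℝ) :
    HasDerivAt (ghostProfile c) (c * sinh (4 * c * x) / 8 - c ^ 2 * x / 2) x := by
  have h := (((hasDerivAt_id' x).const_mul (4 * c)).cosh.div_const 32).sub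
    (((hasDerivAt_pow 2 x).const_mul (c ^ 2)).div_const 4)
  exact h.congr_deriv (by push_cast; ring)

theorem differentiable_ghostProfile (c : ℝ) : Differentiable ℝ (ghostProfile c) :=
  fun x => (hasDerivAt_ghostProfile c x).differentiableAt

theorem deriv_deriv_ghostProfile (c x : ℝ) :
    deriv (deriv (ghostProfile c)) x = (c * sinh (2 * (c * x))) ^ 2 := by
  have hderiv : deriv (ghostProfile c) = fun x => c * sinh (4 * c * x) / 8 - c ^ 2 * x / 2 :=
    funext fun x => (hasDerivAt_ghostProfile c x).deriv
  have h : HasDerivAt (fun x => c * sinh (4 * c * x) / 8 - c ^ 2 * x / 2)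
      (c * (cosh (4 * c * x) * (4 * c * 1)) / 8 - c ^ 2 * 1 / 2) x :=
    ((((hasDerivAt_id' x).const_mul (4 * c)).sinh.const_mul c).div_const 8).sub
      (((hasDerivAt_id' x).const_mul (c ^ 2)).div_const 2)
  rw [hderiv, h.deriv, show 4 * c * x = 2 * (2 * (c * x)) by ring, cosh_two_mul]
  linear_combination c ^ 2 / 2 * cosh_sq_sub_sinh_sq (2 * (c * x))

theorem stmt_4_general (m lam a b : ℝ)
    (g : ℝ → ℝ → ℝ)
    (hg : g = fun u v => -1 + Real.cosh (a * u) ^ 2 + Real.cosh (b * v) ^ 2)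
    (r : ℝ → ℝ → ℝ)
    (hr : r = fun u v =>
      2 * m - 4 * lam ^ 2 * u * v - 1 / 16
        + (1 / 32) * (Real.cosh (4 * a * u) + Real.cosh (4 * b * v))
        - (1 / 4) * (a ^ 2 * u ^ 2 + b ^ 2 * v ^ 2)) :
    ∀ u v : ℝ,
      deriv (fun x => deriv (fun y => r x y) v) u = -4 * lam ^ 2 ∧
      deriv (fun x => deriv (fun x' => r x' v) x) u
        = (deriv (fun x => g x v) u) ^ 2 ∧
      deriv (fun y => deriv (fun y' => r u y') y) v
        = (deriv (fun y => g u y) v) ^ 2 := by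
  have hr_separable : r = fun u v =>
      (2 * m - 1 / 16) + -4 * lam ^ 2 * u * v + ghostProfile a u + ghostProfile b v := by
    rw [hr]; ext u v; simp only [ghostProfile]; ring
  intro u v
  have hg_left : deriv (fun x => g x v) u = a * sinh (2 * (a * u)) := by
    subst hg; exact (((hasDerivAt_cosh_mul_sq a u).const_add (-1)).add_const _).deriv
  have hg_right : deriv (fun y => g u y) v = b * sinh (2 * (b * v)) := by
    subst hg; exact ((hasDerivAt_cosh_mul_sq b v).const_add _).deriv
  subst hr_separable
  refine ⟨deriv_deriv_mixed_of_separable _ _ (differentiable_ghostProfile b) u v, ?_, ?_⟩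
  · rw [deriv_deriv_left_of_separable _ _ (differentiable_ghostProfile a), hg_left,
      deriv_deriv_ghostProfile]
  · rw [deriv_deriv_right_of_separable _ _ (differentiable_ghostProfile b), hg_right,
      deriv_deriv_ghostProfile]

/-- For the colliding hyperbolic ghost fields
`g(u,v) = −1 + cosh²(au) + cosh²(bv)`, real field `f = 0`, and
`r(u,v) = 2m − 4λ²uv − 1/16 + (1/32)(cosh(4au) + cosh(4bv)) − (1/4)(a²u² + b²v²)`,
the CGHS field equations `∂_u∂_v r = −4λ²`, `∂_u∂_u r = (∂_u g)²`,
`∂_v∂_v r = (∂_v g)²` hold at every point of `ℝ²`. -/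
theorem stmt_4 (m lam a b : ℝ)
    (g : ℝ → ℝ → ℝ)
    (hg : g = fun u v => -1 + Real.cosh (a * u) ^ 2 + Real.cosh (b * v) ^ 2)
    (f : ℝ → ℝ → ℝ) (hf : f = fun _ _ => (0 : ℝ))
    (r : ℝ → ℝ → ℝ)
    (hr : r = fun u v =>
      2 * m - 4 * lam ^ 2 * u * v - 1 / 16
        + (1 / 32) * (Real.cosh (4 * a * u) + Real.cosh (4 * b * v))
        - (1 / 4) * (a ^ 2 * u ^ 2 + b ^ 2 * v ^ 2)) :
    ∀ u v : ℝ,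
      deriv (fun x => deriv (fun y => r x y) v) u = -4 * lam ^ 2 ∧
      deriv (fun x => deriv (fun x' => r x' v) x) u
        = (deriv (fun x => g x v) u) ^ 2 ∧
      deriv (fun y => deriv (fun y' => r u y') y) v
        = (deriv (fun y => g u y) v) ^ 2 :=
  stmt_4_general m lam a b g hg r hr
end

section
/- Let m > 0 and λ ≠ 0 be real constants and set r(u,v) = 2m − 4λ²uv. At every point where r(u,v) ≠ 0, the Hayward energy E = (r/2)(1 − (∇r)²/(4λ²r²)), where (∇r)² = −r·(∂_u r)(∂_v r) is the squared gradient of r with respect to the metric ds² = −(4/r)du dv, satisfies E = m; that is, (r/2)·(1 + (∂_u r)(∂_v r)/(4λ² r)) = m. -/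
/-- For the dilaton vacuum `r(u,v) = 2m − 4λ²uv`, wherever
`r ≠ 0` the Hayward energy `E = (r/2)(1 + (∂_u r)(∂_v r)/(4λ²r))` equals the
mass `m`. -/
theorem stmt_10 (m lam : ℝ) (hm : 0 < m) (hlam : lam ≠ 0)
    (r : ℝ → ℝ → ℝ) (hr : r = fun u v => 2 * m - 4 * lam ^ 2 * u * v) :
    ∀ u v : ℝ, r u v ≠ 0 →
      (r u v / 2) *
        (1 + (deriv (fun x => r x v) u) * (deriv (fun y => r u y) v)
              / (4 * lam ^ 2 * r u v)) = m := by
  subst hr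
  intro u v hne
  have h1 : deriv (fun x : ℝ => 2 * m - 4 * lam ^ 2 * x * v) u = -(4 * lam ^ 2 * v) := by
    have : (fun x : ℝ => 2 * m - 4 * lam ^ 2 * x * v)
        = fun x : ℝ => 2 * m - (4 * lam ^ 2 * v) * x := by
      funext x; ring
    rw [this]
    simp [deriv_const_sub, mul_comm]
  have h2 : deriv (fun y : ℝ => 2 * m - 4 * lam ^ 2 * u * y) v = -(4 * lam ^ 2 * u) := by
    have : (fun y : ℝ => 2 * m - 4 * lam ^ 2 * u * y)
        = fun y : ℝ => 2 * m - (4 * lam ^ 2 * u) * y := by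
      funext y; ring
    rw [this]
    simp [deriv_const_sub, mul_comm]
  simp only [h1, h2] at *
  have hl : lam ^ 2 ≠ 0 := pow_ne_zero _ hlam
  field_simp
  ring
end

section
/- Let a > 0 and E ≠ 0 be real constants, and define r(t) = (1/(2a))(1 − E²/cosh²(at)) for t ∈ ℝ. Then: (i) r satisfies the coordinate-time geodesic equation r''(t) = −2a(1 − 2a·r(t))·[1 − (3/(2E²))(1 − 2a·r(t))] for all t ∈ ℝ; and (ii) for all t > 0, the confinement bounds −E² + 1 < 2a·r(t) < 1 hold, so the particle remains confined for all 0 < t < ∞. -/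
/-!
With `w = sech²` the trajectory reads `2a·r(t) = 1 − E²·w(at)`. Using `sinh² = cosh² − 1`,
`w` obeys the autonomous equation `w'' = 4w − 6w²`; rescaling time by `a` multiplies second
derivatives by `a²`, which turns this into the geodesic equation. Confinement is
`0 < w(x) < 1` for `x ≠ 0`.
-/

open Real

theorem deriv_deriv_comp_mul_left (f : ℝ → ℝ) (c x : ℝ) :
    deriv (deriv fun y => f (c * y)) x = c ^ 2 * deriv (deriv f) (c * x) := by
  have hf : deriv (fun y => f (c * y)) = fun y => c * deriv f (c * y) :=
    funext fun y => deriv_comp_mul_left (f := f) (c := c) (x := y)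
  rw [hf, deriv_const_mul_field, deriv_comp_mul_left, smul_eq_mul]
  ring

theorem hasDerivAt_inv_cosh_sq (x : ℝ) :
    HasDerivAt (fun y => (cosh y ^ 2)⁻¹) (-2 * sinh x / cosh x ^ 3) x := by
  have hc : cosh x ≠ 0 := (cosh_pos x).ne'
  refine (((hasDerivAt_cosh x).pow 2).inv (pow_ne_zero 2 hc)).congr_deriv ?_
  simp only [Pi.pow_apply]
  field_simp
  ring

theorem deriv_inv_cosh_sq : deriv (fun y => (cosh y ^ 2)⁻¹) = fun x => -2 * sinh x / cosh x ^ 3 :=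
  funext fun x => (hasDerivAt_inv_cosh_sq x).deriv

theorem deriv_deriv_inv_cosh_sq (x : ℝ) :
    deriv (deriv fun y => (cosh y ^ 2)⁻¹) x = 4 * (cosh x ^ 2)⁻¹ - 6 * ((cosh x ^ 2)⁻¹) ^ 2 := by
  have hc : cosh x ≠ 0 := (cosh_pos x).ne'
  have hderiv : HasDerivAt (fun y => -2 * sinh y / cosh y ^ 3)
      ((6 * sinh x ^ 2 - 2 * cosh x ^ 2) / cosh x ^ 4) x := by
    refine (((hasDerivAt_sinh x).const_mul (-2)).fun_div
      ((hasDerivAt_cosh x).pow 3) (pow_ne_zero 3 hc)).congr_deriv ?_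
    simp only [Pi.pow_apply]
    field_simp
    ring
  rw [deriv_inv_cosh_sq, hderiv.deriv]
  field_simp
  linear_combination (-6) * cosh_sq_sub_sinh_sq x

theorem inv_cosh_sq_lt_one {x : ℝ} (hx : x ≠ 0) : (cosh x ^ 2)⁻¹ < 1 :=
  inv_lt_one_of_one_lt₀ (one_lt_pow₀ (one_lt_cosh.mpr hx) two_ne_zero)

/-- With `a > 0`, `E ≠ 0` and
`r(t) = (1/(2a))(1 − E²/cosh²(at))`:
(i) `r'' (t) = −2a(1 − 2a·r)[1 − (3/(2E²))(1 − 2a·r)]` for all `t`;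
(ii) for all `t > 0` the confinement bounds `−E² + 1 < 2a·r(t) < 1` hold. -/
theorem stmt_14 (a E : ℝ) (ha : 0 < a) (hE : E ≠ 0)
    (r : ℝ → ℝ)
    (hr : r = fun t => (1 / (2 * a)) * (1 - E ^ 2 / (Real.cosh (a * t)) ^ 2)) :
    (∀ t : ℝ,
      deriv (deriv r) t
        = -2 * a * (1 - 2 * a * r t)
            * (1 - (3 / (2 * E ^ 2)) * (1 - 2 * a * r t))) ∧
    (∀ t : ℝ, 0 < t → -E ^ 2 + 1 < 2 * a * r t ∧ 2 * a * r t < 1) := by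
  set w : ℝ → ℝ := fun x => (cosh x ^ 2)⁻¹ with hw
  have hr' : r = fun t => 1 / (2 * a) + -E ^ 2 / (2 * a) * w (a * t) := by
    rw [hr]; ext t; simp only [hw]; ring
  have hrt (t : ℝ) : 2 * a * r t = 1 - E ^ 2 * w (a * t) := by
    rw [hr']; field_simp; ring
  refine ⟨fun t => ?_, fun t ht => ?_⟩
  · rw [hrt, hr', deriv_const_add', deriv_const_mul_field', deriv_const_mul_field,
      deriv_deriv_comp_mul_left, deriv_deriv_inv_cosh_sq]
    simp only [hw]
    field_simp
    ring
  · have hpos : 0 < w (a * t) := inv_pos.mpr (pow_pos (cosh_pos _) 2)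
    have hlt : w (a * t) < 1 := inv_cosh_sq_lt_one (mul_pos ha ht).ne'
    have hE2 : 0 < E ^ 2 := by positivity
    rw [hrt]
    constructor <;> nlinarith
end

section
/- Let a > 0 and let (u,v) range over the open set where sin(u+v) ≠ 1 and sin(u+v) ≠ −1. Define F(u,v) = a(1 − sin(u+v)), r(u,v) = 1/F(u,v), θ(u,v) = u − v + π/2, and f(ρ) = 1 − 2aρ. Then on this set: (i) (∂_u r)²/f(r) + r²(∂_u θ)² = 0 and (∂_v r)²/f(r) + r²(∂_v θ)² = 0; (ii) (∂_u r)(∂_v r)/f(r) + r²(∂_u θ)(∂_v θ) = −2/F²; (iii) −f(r) = a²cos²(u+v)/F²; (iv) r²·sin²θ = cos²(u−v)/F². -/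
/-!
Along each null direction `u` or `v` the radius `r = 1/F` depends on `u + v` only, with
`∂r = a cos(u+v)/F²`, while `∂θ = ±1`. With `cos² = (1 - sin)(1 + sin)` one finds
`f(r) = -a² cos²(u+v)/F²`, which is (iii), so that `(∂r)²/f(r) = -1/F² = -r²`; this single
identity gives (i) and (ii), and (iv) is `sin(x + π/2) = cos x`.
-/

open Real

theorem hasDerivAt_one_div_mul_one_sub_sin {a w : ℝ} (h : a * (1 - sin w) ≠ 0) :
    HasDerivAt (fun w => 1 / (a * (1 - sin w))) (a * cos w / (a * (1 - sin w)) ^ 2) w :=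
  ((hasDerivAt_const w 1).fun_div (((hasDerivAt_sin w).const_sub 1).const_mul a) h).congr_deriv
    (by ring)

theorem one_sub_two_mul_one_div_mul_one_sub_sin {a w : ℝ} (ha : a ≠ 0) (hw : sin w ≠ 1) :
    1 - 2 * a * (1 / (a * (1 - sin w))) = -(a * cos w) ^ 2 / (a * (1 - sin w)) ^ 2 := by
  have hs : 1 - sin w ≠ 0 := sub_ne_zero.mpr hw.symm
  rw [mul_pow a (cos w), cos_sq']
  field_simp
  ring

theorem sq_div_neg_sq_div_sq {K : Type*} [Field K] {p q : K} (hp : p ≠ 0) :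
    (p / q ^ 2) ^ 2 / (-p ^ 2 / q ^ 2) = -1 / q ^ 2 := by
  field_simp

/-- For `a > 0`, on the open set where `sin(u+v) ≠ ±1`, the
transformation `F(u,v) = a(1 − sin(u+v))`, `r = 1/F`, `θ = u − v + π/2`,
with `f(ρ) = 1 − 2aρ`, pulls the pure third-order Lovelock static metric
back to the double-null form:
(i) `(∂_u r)²/f(r) + r²(∂_u θ)² = 0` and `(∂_v r)²/f(r) + r²(∂_v θ)² = 0`;
(ii) `(∂_u r)(∂_v r)/f(r) + r²(∂_u θ)(∂_v θ) = −2/F²`;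
(iii) `−f(r) = a²cos²(u+v)/F²`;
(iv) `r²·sin²θ = cos²(u−v)/F²`. -/
theorem stmt_17 (a : ℝ) (ha : 0 < a)
    (F r θ : ℝ → ℝ → ℝ) (f : ℝ → ℝ)
    (hF : F = fun u v => a * (1 - Real.sin (u + v)))
    (hr : r = fun u v => 1 / F u v)
    (hθ : θ = fun u v => u - v + Real.pi / 2)
    (hf : f = fun ρ => 1 - 2 * a * ρ) :
    ∀ u v : ℝ, Real.sin (u + v) ≠ 1 → Real.sin (u + v) ≠ -1 →
      ((deriv (fun x => r x v) u) ^ 2 / f (r u v)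
          + (r u v) ^ 2 * (deriv (fun x => θ x v) u) ^ 2 = 0) ∧
      ((deriv (fun y => r u y) v) ^ 2 / f (r u v)
          + (r u v) ^ 2 * (deriv (fun y => θ u y) v) ^ 2 = 0) ∧
      ((deriv (fun x => r x v) u) * (deriv (fun y => r u y) v) / f (r u v)
          + (r u v) ^ 2 * (deriv (fun x => θ x v) u) * (deriv (fun y => θ u y) v)
          = -2 / (F u v) ^ 2) ∧
      (-(f (r u v)) = a ^ 2 * (Real.cos (u + v)) ^ 2 / (F u v) ^ 2) ∧
      ((r u v) ^ 2 * (Real.sin (θ u v)) ^ 2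
          = (Real.cos (u - v)) ^ 2 / (F u v) ^ 2) := by
  subst hF hr hθ hf
  intro u v hne_one hne_neg_one
  have hF : a * (1 - sin (u + v)) ≠ 0 := mul_ne_zero ha.ne' (sub_ne_zero.mpr (Ne.symm hne_one))
  have hc : a * cos (u + v) ≠ 0 := mul_ne_zero ha.ne' (mt cos_eq_zero_iff_sin_eq.mp (by tauto))
  have hdr := (hasDerivAt_one_div_mul_one_sub_sin hF).deriv
  have hru : deriv (fun x => 1 / (a * (1 - sin (x + v)))) u
      = a * cos (u + v) / (a * (1 - sin (u + v))) ^ 2 :=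
    (deriv_comp_add_const (fun w => 1 / (a * (1 - sin w))) v u).trans hdr
  have hrv : deriv (fun y => 1 / (a * (1 - sin (u + y)))) v
      = a * cos (u + v) / (a * (1 - sin (u + v))) ^ 2 :=
    (deriv_comp_const_add (fun w => 1 / (a * (1 - sin w))) u v).trans hdr
  have hθu : deriv (fun x => x - v + π / 2) u = 1 := by simp
  have hθv : deriv (fun y => u - y + π / 2) v = -1 := by simp
  have hfr := one_sub_two_mul_one_div_mul_one_sub_sin ha.ne' hne_one
  have hkey := sq_div_neg_sq_div_sq (q := a * (1 - sin (u + v))) hc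
  simp only [hru, hrv, hθu, hθv, hfr, ← sq, hkey, sin_add_pi_div_two]
  generalize a * (1 - sin (u + v)) = F
  refine ⟨?_, ?_, ?_, ?_, ?_⟩ <;> ring
end
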